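/- Let (α, λ, f) be a Sieben twisted S-module structure on a semilattice of groups A. If s ≤ s' and t ≤ t' in the natural partial order of S, then f(s,t) = α(stt⁻¹s⁻¹) f(s',t'). -/
import Mathlib


/-- An inverse semigroup structure: `iv` assigns to each element its unique
(generalized) inverse. -/
structure InvSemi (S : Type*) [Semigroup S] (iv : S → S) : Prop where
  rr : ∀ s, s * iv s * s = s
  ri : ∀ s, iv s * s * iv s = iv s
  uniq : ∀ s t, s * t * s = s → t * s * t = t → t = iv s

/-- A twisted `S`-module structure `Λ = (α, lam, tf)` on a semilattice of
groups `A` (Lausch): `α : E(S) ≅ E(A)` is an isomorphism of semilattices,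
`lam s` is a relatively invertible endomorphism of `A` for all `s`, and
`tf : S² → A` is a twisting with `tf s t ∈ A_{α(s t t⁻¹ s⁻¹)}`, subject to
axioms (i)–(v). -/
structure TwistedModule (S A : Type*) [Semigroup S] [Semigroup A]
    (ivS : S → S) (ivA : A → A) where
  α : S → A
  lam : S → A → A
  tf : S → S → A
  α_idem : ∀ e : S, IsIdempotentElem e → IsIdempotentElem (α e)
  α_inj : ∀ e e' : S, IsIdempotentElem e → IsIdempotentElem e' →
    α e = α e' → e = e'
  α_surj : ∀ a : A, IsIdempotentElem a → ∃ e : S, IsIdempotentElem e ∧ α e = a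
  α_mul : ∀ e e' : S, IsIdempotentElem e → IsIdempotentElem e' →
    α (e * e') = α e * α e'
  lam_mul : ∀ s a b, lam s (a * b) = lam s a * lam s b
  lam_relinv : ∀ s : S, ∃ (ψ : A → A) (e : A),
    (∀ a b, ψ (a * b) = ψ a * ψ b) ∧ IsIdempotentElem e ∧
    (∀ a, ψ (lam s a) = e * a) ∧ (∀ a, lam s (ψ a) = lam s e * a) ∧
    (∀ a, e * ψ a = ψ a ∧ ψ a * e = ψ a) ∧
    (∀ a, lam s e * lam s a = lam s a ∧ lam s a * lam s e = lam s a)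
  tf_mem : ∀ s t : S, tf s t * ivA (tf s t) = α (s * t * ivS t * ivS s) ∧
    ivA (tf s t) * tf s t = α (s * t * ivS t * ivS s)
  ax1 : ∀ (e : S) (a : A), IsIdempotentElem e → lam e a = α e * a
  ax2 : ∀ (s e : S), IsIdempotentElem e → lam s (α e) = α (s * e * ivS s)
  ax3 : ∀ (s t : S) (a : A),
    lam s (lam t a) = tf s t * lam (s * t) a * ivA (tf s t)
  ax4 : ∀ (s e : S), IsIdempotentElem e →
    tf (s * e) e = α (s * e * ivS s) ∧ tf e (e * s) = α (e * s * ivS s)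
  ax5 : ∀ s t u : S,
    lam s (tf t u) * tf s (t * u) = tf s t * tf (s * t) u

/-- The Sieben normality condition (iv'): `f(s,e) = α(ses⁻¹)` and
`f(e,s) = α(ess⁻¹)` for all `s ∈ S` and idempotents `e`. -/
def Sieben {S A : Type*} [Semigroup S] [Semigroup A]
    (ivS : S → S) (ivA : A → A) (Λ : TwistedModule S A ivS ivA) : Prop :=
  ∀ (s e : S), IsIdempotentElem e →
    Λ.tf s e = Λ.α (s * e * ivS s) ∧ Λ.tf e s = Λ.α (e * s * ivS s)

section IS
variable {S : Type*} [Semigroup S] {iv : S → S} (h : InvSemi S iv)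

theorem comm_mid {x y c : S} (hc : x * y = y * x) : x * (y * c) = y * (x * c) := by
  rw [← mul_assoc, hc, mul_assoc]

theorem idem_mid {e c : S} (he : IsIdempotentElem e) : e * (e * c) = e * c := by
  rw [← mul_assoc, he]

include h

theorem is_idem_mul_iv (s : S) : IsIdempotentElem (s * iv s) := by
  show s * iv s * (s * iv s) = _
  rw [← mul_assoc, h.rr]

theorem is_idem_iv_mul (s : S) : IsIdempotentElem (iv s * s) := by
  show iv s * s * (iv s * s) = _
  rw [← mul_assoc, h.ri]

theorem idem_iv {e : S} (he : IsIdempotentElem e) : iv e = e := by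
  have : e * e * e = e := by rw [he, he]
  exact (h.uniq e e this this).symm

theorem iv_iv (s : S) : iv (iv s) = s := (h.uniq (iv s) s (h.ri s) (h.rr s)).symm

theorem idem_mul_idem {e f : S} (he : IsIdempotentElem e) (hf : IsIdempotentElem f) :
    IsIdempotentElem (e * f) := by
  set x := iv (e * f) with hx
  have hk : (f * x * e) * (f * x * e) = f * x * e := by
    have := h.ri (e * f)
    calc (f * x * e) * (f * x * e) = f * (x * (e * f) * x) * e := by
          simp only [mul_assoc]
      _ = f * x * e := by rw [h.ri (e * f)]
  have h1 : (e * f) * (f * x * e) * (e * f) = e * f := by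
    have : (e * f) * (f * x * e) * (e * f) = (e * f) * x * (e * f) := by
      calc (e * f) * (f * x * e) * (e * f) = e * (f * f) * x * (e * e) * f := by
            simp only [mul_assoc]
        _ = (e * f) * x * (e * f) := by simp only [mul_assoc, idem_mid hf, idem_mid he]
    rw [this, h.rr]
  have h2 : (f * x * e) * (e * f) * (f * x * e) = f * x * e := by
    calc (f * x * e) * (e * f) * (f * x * e) = f * (x * ((e * e) * (f * f)) * x) * e := by
          simp only [mul_assoc]
      _ = f * (x * (e * f) * x) * e := by rw [he, hf]
      _ = f * x * e := by rw [h.ri (e * f)]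
  have hke : f * x * e = x := h.uniq (e * f) (f * x * e) h1 h2
  have hxi : IsIdempotentElem x := by rw [← hke]; exact hk
  have : e * f = iv x := h.uniq x (e * f) (by exact h.ri (e*f)) (by exact h.rr (e*f))
  rw [this, idem_iv h hxi]; exact hxi

theorem idem_comm {e f : S} (he : IsIdempotentElem e) (hf : IsIdempotentElem f) :
    e * f = f * e := by
  have hef : IsIdempotentElem (e * f) := idem_mul_idem h he hf
  have hfe : IsIdempotentElem (f * e) := idem_mul_idem h hf he
  have h1 : (e * f) * (f * e) * (e * f) = e * f := by
    calc (e * f) * (f * e) * (e * f) = e * (f * f) * (e * e) * f := by simp only [mul_assoc]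
      _ = (e * f) * (e * f) := by rw [hf, he]; simp only [mul_assoc]
      _ = e * f := hef
  have h2 : (f * e) * (e * f) * (f * e) = f * e := by
    calc (f * e) * (e * f) * (f * e) = f * (e * e) * (f * f) * e := by simp only [mul_assoc]
      _ = (f * e) * (f * e) := by rw [he, hf]; simp only [mul_assoc]
      _ = f * e := hfe
  have := h.uniq (e * f) (f * e) h1 h2
  rw [this, idem_iv h hef]

theorem iv_mul (s t : S) : iv (s * t) = iv t * iv s := by
  have c1 : (t * iv t) * (iv s * s) = (iv s * s) * (t * iv t) :=
    idem_comm h (is_idem_mul_iv h t) (is_idem_iv_mul h s)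
  have h1 : (s * t) * (iv t * iv s) * (s * t) = s * t := by
    calc (s * t) * (iv t * iv s) * (s * t) = s * ((t * iv t) * (iv s * s)) * t := by
          simp only [mul_assoc]
      _ = s * ((iv s * s) * (t * iv t)) * t := by rw [c1]
      _ = (s * iv s * s) * (t * iv t * t) := by simp only [mul_assoc]
      _ = s * t := by rw [h.rr, h.rr]
  have h2 : (iv t * iv s) * (s * t) * (iv t * iv s) = iv t * iv s := by
    calc (iv t * iv s) * (s * t) * (iv t * iv s) = iv t * ((iv s * s) * (t * iv t)) * iv s := by
          simp only [mul_assoc]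
      _ = iv t * ((t * iv t) * (iv s * s)) * iv s := by rw [c1]
      _ = (iv t * t * iv t) * (iv s * s * iv s) := by simp only [mul_assoc]
      _ = iv t * iv s := by rw [h.ri, h.ri]
  exact (h.uniq (s * t) (iv t * iv s) h1 h2).symm

theorem conj_idem {K : S} (s : S) (hK : IsIdempotentElem K) :
    IsIdempotentElem (s * (K * iv s)) := by
  show s * (K * iv s) * (s * (K * iv s)) = _
  have c1 : K * (iv s * s) = (iv s * s) * K := idem_comm h hK (is_idem_iv_mul h s)
  calc s * (K * iv s) * (s * (K * iv s)) = s * (K * (iv s * s)) * (K * iv s) := by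
        simp only [mul_assoc]
    _ = s * ((iv s * s) * K) * (K * iv s) := by rw [c1]
    _ = (s * iv s * s) * (K * K) * iv s := by simp only [mul_assoc]
    _ = s * (K * iv s) := by rw [h.rr, hK]; simp only [mul_assoc]


theorem rr_mid (s c : S) : s * (iv s * (s * c)) = s * c := by
  rw [← mul_assoc, ← mul_assoc, h.rr]

theorem rr_mid2 (s c : S) : (s * iv s) * (s * c) = s * c := by
  rw [← mul_assoc, h.rr]

theorem clifford_central (hCl : ∀ a : S, a * iv a = iv a * a) {e : S}
    (he : IsIdempotentElem e) (a : S) : e * a = a * e := by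
  have hie : iv e = e := idem_iv h he
  have hqi : IsIdempotentElem (a * iv a) := is_idem_mul_iv h a
  have hcomm : e * (a * iv a) = (a * iv a) * e := idem_comm h he hqi
  have h1 : (e * a) * (iv a * e) = (iv a * e) * (e * a) := by
    have := hCl (e * a); rwa [iv_mul h, hie] at this
  have h2 : e * (a * iv a) = iv a * (e * a) := by
    calc e * (a * iv a) = (a * iv a) * e := hcomm
      _ = ((a * iv a) * e) * e := by rw [mul_assoc (a * iv a) e e, he]
      _ = (e * (a * iv a)) * e := by rw [hcomm]
      _ = (e * a) * (iv a * e) := by simp only [mul_assoc]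
      _ = (iv a * e) * (e * a) := h1
      _ = iv a * ((e * e) * a) := by simp only [mul_assoc]
      _ = iv a * (e * a) := by rw [he]
  have haa : a * (a * iv a) = a := by rw [hCl a, ← mul_assoc, h.rr]
  have h3 : a * (e * (a * iv a)) = e * a := by
    rw [h2]
    calc a * (iv a * (e * a)) = ((a * iv a) * e) * a := by simp only [mul_assoc]
      _ = (e * (a * iv a)) * a := by rw [hcomm]
      _ = e * (a * (iv a * a)) := by simp only [mul_assoc]
      _ = e * (a * (a * iv a)) := by rw [← hCl a]
      _ = e * a := by rw [haa]
  have h4 : a * (e * (a * iv a)) = a * e := by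
    rw [hcomm, ← mul_assoc, haa]
  rw [← h3, h4]

end IS


/-- For a Sieben twisted `S`-module: if `s ≤ s'` and `t ≤ t'` in the natural
partial order, then `f(s,t) = α(stt⁻¹s⁻¹) f(s',t')`. -/
theorem stmt16 {S A : Type*} [Semigroup S] [Semigroup A]
    (ivS : S → S) (ivA : A → A) (hS : InvSemi S ivS) (hA : InvSemi A ivA)
    (hCl : ∀ a : A, a * ivA a = ivA a * a)
    (Λ : TwistedModule S A ivS ivA) (hSieb : Sieben ivS ivA Λ)
    (s s' t t' : S)
    (hs : ∃ e, IsIdempotentElem e ∧ s = e * s')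
    (ht : ∃ e, IsIdempotentElem e ∧ t = e * t') :
    Λ.tf s t = Λ.α (s * t * ivS t * ivS s) * Λ.tf s' t' := by
  have αc : ∀ {w : S}, IsIdempotentElem w → ∀ a : A, Λ.α w * a = a * Λ.α w :=
    fun hw a => clifford_central hA hCl (Λ.α_idem _ hw) a
  have absL : ∀ u v : S, Λ.α (u * v * ivS v * ivS u) * Λ.tf u v = Λ.tf u v := by
    intro u v
    have h0 := hA.rr (Λ.tf u v)
    rwa [(Λ.tf_mem u v).1] at h0
  have idemW : ∀ u v : S, IsIdempotentElem (u * v * ivS v * ivS u) := by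
    intro u v
    have h1 : u * v * ivS v * ivS u = (u * v) * ivS (u * v) := by
      rw [iv_mul hS]; simp only [mul_assoc]
    rw [h1]; exact is_idem_mul_iv hS (u * v)
  -- Lemma A : tf (e*u) v = α (e * (u*v*v⁻¹*u⁻¹)) * tf u v
  have lemA : ∀ e u v : S, IsIdempotentElem e →
      Λ.tf (e * u) v = Λ.α (e * (u * v * ivS v * ivS u)) * Λ.tf u v := by
    intro e u v he
    have hh0 : IsIdempotentElem (u * v * ivS v * ivS u) := idemW u v
    have heh : IsIdempotentElem (e * (u * v * ivS v * ivS u)) :=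
      idem_mul_idem hS he hh0
    have h5 := Λ.ax5 e u v
    rw [Λ.ax1 e (Λ.tf u v) he, (hSieb (u * v) e he).2, (hSieb u e he).2] at h5
    have F3A : e * (u * v) * ivS (u * v) = e * (u * v * ivS v * ivS u) := by
      rw [iv_mul hS u v]; simp only [mul_assoc]
    rw [F3A] at h5
    have F4 : Λ.α e * Λ.tf u v = Λ.α (e * (u * v * ivS v * ivS u)) * Λ.tf u v := by
      conv_lhs => rw [← absL u v]
      rw [← mul_assoc, ← Λ.α_mul e (u * v * ivS v * ivS u) he hh0]
    have F5 : Λ.α e * Λ.tf u v * Λ.α (e * (u * v * ivS v * ivS u)) =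
        Λ.α (e * (u * v * ivS v * ivS u)) * Λ.tf u v := by
      rw [F4, mul_assoc, ← αc heh (Λ.tf u v), idem_mid (Λ.α_idem _ heh)]
    rw [F5] at h5
    have hw : (e * u) * v * ivS v * ivS (e * u) = e * (u * v * ivS v * ivS u) := by
      rw [iv_mul hS e u, idem_iv hS he]
      calc (e * u) * v * ivS v * (ivS u * e)
          = e * ((u * v * ivS v * ivS u) * e) := by simp only [mul_assoc]
        _ = e * (e * (u * v * ivS v * ivS u)) := by rw [idem_comm hS hh0 he]
        _ = e * (u * v * ivS v * ivS u) := idem_mid he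
    have F6 : Λ.α (e * (u * v * ivS v * ivS u)) * Λ.tf (e * u) v = Λ.tf (e * u) v := by
      rw [← hw]; exact absL (e * u) v
    have hw1 : IsIdempotentElem (e * u * ivS u) := by
      rw [mul_assoc e]; exact idem_mul_idem hS he (is_idem_mul_iv hS u)
    have hwe : (e * u * ivS u) * (e * (u * v * ivS v * ivS u)) =
        e * (u * v * ivS v * ivS u) := by
      simp only [mul_assoc]
      rw [← mul_assoc u (ivS u), comm_mid (idem_comm hS (is_idem_mul_iv hS u) he),
        idem_mid he, rr_mid2 hS]
    have F7 : Λ.α (e * u * ivS u) * Λ.α (e * (u * v * ivS v * ivS u)) =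
        Λ.α (e * (u * v * ivS v * ivS u)) := by
      rw [← Λ.α_mul _ _ hw1 heh, hwe]
    rw [← F6, ← mul_assoc (Λ.α (e * u * ivS u)), F7, F6] at h5
    exact h5.symm
  -- Lemma B : tf s (g*v) = tf (s*g) v
  have lemB : ∀ s g v : S, IsIdempotentElem g → Λ.tf s (g * v) = Λ.tf (s * g) v := by
    intro s g v hg
    have hK : IsIdempotentElem (g * (v * ivS v)) :=
      idem_mul_idem hS hg (is_idem_mul_iv hS v)
    have hgv : IsIdempotentElem (g * v * ivS v) := by rw [mul_assoc g]; exact hK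
    have h5 := Λ.ax5 s g v
    rw [(hSieb v g hg).2, (hSieb s g hg).1, Λ.ax2 s (g * v * ivS v) hgv] at h5
    have hconj : IsIdempotentElem (s * (g * v * ivS v) * ivS s) := by
      rw [mul_assoc s]; exact conj_idem hS s hgv
    have hwc : s * (g * (v * (ivS v * (g * ivS s)))) = s * (g * (v * (ivS v * ivS s))) := by
      rw [← mul_assoc v (ivS v) (g * ivS s),
        comm_mid (idem_comm hS (is_idem_mul_iv hS v) hg), idem_mid hg,
        mul_assoc v (ivS v)]
    have hw1 : s * (g * v) * ivS (g * v) * ivS s = s * (g * v * ivS v) * ivS s := by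
      rw [iv_mul hS g v, idem_iv hS hg]
      calc s * (g * v) * (ivS v * g) * ivS s
          = s * (g * (v * (ivS v * (g * ivS s)))) := by simp only [mul_assoc]
        _ = s * (g * (v * (ivS v * ivS s))) := hwc
        _ = s * (g * v * ivS v) * ivS s := by simp only [mul_assoc]
    have F1 : Λ.α (s * (g * v * ivS v) * ivS s) * Λ.tf s (g * v) = Λ.tf s (g * v) := by
      rw [← hw1]; exact absL s (g * v)
    rw [F1] at h5
    have hw2 : (s * g) * v * ivS v * ivS (s * g) = s * (g * v * ivS v) * ivS s := by
      rw [iv_mul hS s g, idem_iv hS hg]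
      calc (s * g) * v * ivS v * (g * ivS s)
          = s * (g * (v * (ivS v * (g * ivS s)))) := by simp only [mul_assoc]
        _ = s * (g * (v * (ivS v * ivS s))) := hwc
        _ = s * (g * v * ivS v) * ivS s := by simp only [mul_assoc]
    have F2 : Λ.α (s * (g * v * ivS v) * ivS s) * Λ.tf (s * g) v = Λ.tf (s * g) v := by
      rw [← hw2]; exact absL (s * g) v
    have hsgi : IsIdempotentElem (s * g * ivS s) := by
      rw [mul_assoc s]; exact conj_idem hS s hg
    have hwd : (s * g * ivS s) * (s * (g * v * ivS v) * ivS s) =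
        s * (g * v * ivS v) * ivS s := by
      simp only [mul_assoc]
      rw [← mul_assoc (ivS s) s, comm_mid (idem_comm hS hg (is_idem_iv_mul hS s)),
        idem_mid hg, mul_assoc (ivS s) s, rr_mid hS]
    have F3 : Λ.α (s * g * ivS s) * Λ.α (s * (g * v * ivS v) * ivS s) =
        Λ.α (s * (g * v * ivS v) * ivS s) := by
      rw [← Λ.α_mul _ _ hsgi hconj, hwd]
    rw [← F2, ← mul_assoc (Λ.α (s * g * ivS s)), F3, F2] at h5
    exact h5
  obtain ⟨e, he, rfl⟩ := hs
  obtain ⟨g, hg, rfl⟩ := ht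
  rw [lemA e s' (g * t') he, lemB s' g t' hg]
  have hsg : s' * g = (s' * (g * ivS s')) * s' := by
    calc s' * g = s' * (ivS s' * (s' * g)) := (rr_mid hS s' g).symm
      _ = s' * ((ivS s' * s') * g) := by rw [mul_assoc]
      _ = s' * (g * (ivS s' * s')) := by rw [idem_comm hS (is_idem_iv_mul hS s') hg]
      _ = (s' * (g * ivS s')) * s' := by simp only [mul_assoc]
  rw [hsg, lemA (s' * (g * ivS s')) s' t' (conj_idem hS s' hg)]
  have hG : (e * s') * (g * t') * ivS (g * t') * ivS (e * s') =
      e * (s' * (g * t') * ivS (g * t') * ivS s') := by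
    rw [iv_mul hS e s', idem_iv hS he]
    calc (e * s') * (g * t') * ivS (g * t') * (ivS s' * e)
        = e * ((s' * (g * t') * ivS (g * t') * ivS s') * e) := by simp only [mul_assoc]
      _ = e * (e * (s' * (g * t') * ivS (g * t') * ivS s')) := by
          rw [idem_comm hS (idemW s' (g * t')) he]
      _ = e * (s' * (g * t') * ivS (g * t') * ivS s') := idem_mid he
  rw [hG]
  have hW1 : s' * (g * t') * ivS (g * t') * ivS s' =
      s' * (g * (t' * (ivS t' * ivS s'))) := by
    rw [iv_mul hS g t', idem_iv hS hg]
    simp only [mul_assoc]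
    rw [← mul_assoc t' (ivS t') (g * ivS s'),
      comm_mid (idem_comm hS (is_idem_mul_iv hS t') hg), idem_mid hg,
      mul_assoc t' (ivS t')]
  rw [hW1]
  have hCW : (s' * (g * ivS s')) * (s' * t' * ivS t' * ivS s') =
      s' * (g * (t' * (ivS t' * ivS s'))) := by
    simp only [mul_assoc]
    rw [← mul_assoc (ivS s') s', comm_mid (idem_comm hS hg (is_idem_iv_mul hS s')),
      mul_assoc (ivS s') s', rr_mid hS]
  rw [hCW]
  have hXeq : s' * ((g * (t' * ivS t')) * ivS s') = s' * (g * (t' * (ivS t' * ivS s'))) := by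
    simp only [mul_assoc]
  have hN : IsIdempotentElem (s' * (g * (t' * (ivS t' * ivS s')))) :=
    hXeq ▸ conj_idem hS s' (idem_mul_idem hS hg (is_idem_mul_iv hS t'))
  have heN : IsIdempotentElem (e * (s' * (g * (t' * (ivS t' * ivS s'))))) :=
    idem_mul_idem hS he hN
  have hfin : Λ.α (e * (s' * (g * (t' * (ivS t' * ivS s'))))) *
      Λ.α (s' * (g * (t' * (ivS t' * ivS s')))) =
      Λ.α (e * (s' * (g * (t' * (ivS t' * ivS s'))))) := by
    rw [← Λ.α_mul _ _ heN hN,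
      mul_assoc e (s' * (g * (t' * (ivS t' * ivS s')))) (s' * (g * (t' * (ivS t' * ivS s')))),
      hN.eq]
  rw [← mul_assoc, hfin]
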